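/- 2-switching ratio upper bound: if M ⊆ K_n, uv ∉ M, and f := 1 - (D(d_u + m_u) + D(d_v + m_v))/(2m(G)) > 0, then |G_d(uv, M)| / |G_d(∅, M + uv)| ≤ (d_u·d_v / (2m(G))) · (1/f), where G_d(X,Y) is the set of graphs with degree sequence d containing X and avoiding Y (both sets assumed nonempty), m(G) = (1/2)·sum of d, m_w is the degree of w in M, and D(k) is the sum of the k largest entries of d. -/

import Mathlib

/-!
Double counting of 2-switchings. For `G ∈ G_d(uv, M)` and an ordered edge `(x, y)` of `G` such
that neither `ux` nor `vy` is an edge of `G` or of `M`, replacing `uv, xy` by `ux, vy` gives a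
graph `H ∈ G_d(∅, M + uv)` with `x ∈ N_H(u)` and `y ∈ N_H(v)`, and the reverse switching
recovers `G`. So `(G, x, y) ↦ (H, x, y)` is injective, and its image has at most
`|G_d(∅, M + uv)| d_u d_v` elements. The ordered edges lost at `G` have `x` among the at most
`d_u + m_u + 1` vertices `u, N_G(u), N_M(u)`, or `y` among the analogous vertices for `v`;
since `(u, v)` lies on both sides, at most `D(d_u + m_u) + D(d_v + m_v)` of the `2m(G)`
ordered edges of `G` are lost.
-/


open Finset SimpleGraph

/-- The graphs with degree sequence `d` containing `X` and avoiding `Y`. -/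
def Gset {V : Type*} [Fintype V] [DecidableEq V] (d : V → ℕ) (X Y : SimpleGraph V) :
    Set (SimpleGraph V) :=
  {G | (∀ v, (G.neighborSet v).ncard = d v) ∧ X ≤ G ∧ Disjoint G Y}

/-- The graph consisting of the single edge `uv`. -/
def edgeGraph {V : Type*} (u v : V) : SimpleGraph V :=
  SimpleGraph.fromEdgeSet {s(u, v)}

/-- Sum of the `k` largest entries of `d`. -/
def Dsum {V : Type*} [Fintype V] (d : V → ℕ) (k : ℕ) : ℕ :=
  (Finset.univ.powerset.filter (fun S => S.card ≤ k)).sup (fun S => ∑ w ∈ S, d w)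

lemma sum_le_Dsum {V : Type*} [Fintype V] (d : V → ℕ) {S : Finset V} {k : ℕ} (h : #S ≤ k) :
    ∑ w ∈ S, d w ≤ Dsum d k :=
  le_sup (f := fun S => ∑ w ∈ S, d w) (by simp [h])

lemma div_le_div_mul_one_div_one_sub_div {a b p S D : ℝ} (hb : 0 ≤ b) (hp : 0 ≤ p)
    (hS : 0 < S) (hf : 0 < 1 - D / S) (h : a * (S - D) ≤ b * p) :
    a / b ≤ p / S * (1 / (1 - D / S)) := by
  have hSD : 0 < S - D := by simpa [sub_mul, div_mul_cancel₀ _ hS.ne'] using mul_pos hf hS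
  rw [show p / S * (1 / (1 - D / S)) = p / (S - D) by field_simp]
  refine div_le_of_le_mul₀ hb (by positivity) ?_
  rw [div_mul_eq_mul_div, le_div_iff₀ hSD]
  linarith

namespace SimpleGraph

variable {V : Type*}

lemma adj_of_mem_Gset [Fintype V] [DecidableEq V] {d : V → ℕ} {G M : SimpleGraph V} {u v : V}
    (huv : u ≠ v) (hG : G ∈ Gset d (edgeGraph u v) M) : G.Adj u v :=
  ((edge_le_iff _).mp hG.2.1).resolve_left huv

lemma edge_sup_edge_le {G : SimpleGraph V} {a b c e : V} (hab : G.Adj a b) (hce : G.Adj c e) :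
    edge a b ⊔ edge c e ≤ G :=
  sup_le ((edge_le_iff _).mpr (.inr hab)) ((edge_le_iff _).mpr (.inr hce))

lemma disjoint_edge_sup_edge {G : SimpleGraph V} {a b c e : V} (hab : ¬G.Adj a b)
    (hce : ¬G.Adj c e) : Disjoint G (edge a b ⊔ edge c e) :=
  disjoint_sup_right.mpr ⟨(disjoint_edge _).mpr hab, (disjoint_edge _).mpr hce⟩

lemma pos_of_mem_Gset [Fintype V] [DecidableEq V] {d : V → ℕ} {G M : SimpleGraph V} {u v : V}
    (huv : u ≠ v) (hG : G ∈ Gset d (edgeGraph u v) M) : 0 < d u := by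
  rw [← hG.1 u]
  exact (Set.ncard_pos (Set.toFinite _)).mpr ⟨v, adj_of_mem_Gset huv hG⟩

lemma ncard_neighborSet_sdiff_sup [Finite V] {G A B : SimpleGraph V} (hA : A ≤ G)
    (hB : Disjoint G B) (w : V) :
    ((G \ A ⊔ B).neighborSet w).ncard + (A.neighborSet w).ncard
      = (G.neighborSet w).ncard + (B.neighborSet w).ncard := by
  have hAw : A.neighborSet w ⊆ G.neighborSet w := fun a h => hA h
  have hBw : Disjoint (G.neighborSet w \ A.neighborSet w) (B.neighborSet w) :=
    Set.disjoint_left.mpr fun a ha hb => hB.le_bot ⟨ha.1, hb⟩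
  rw [neighborSet_sup, neighborSet_sdiff, Set.ncard_union_eq hBw, add_right_comm,
    Set.ncard_sdiff_add_ncard_of_subset hAw]

lemma ncard_neighborSet_edge_sup_edge [DecidableEq V] {a b c e : V} (hab : a ≠ b) (hce : c ≠ e)
    (hac : a ≠ c) (hae : a ≠ e) (hbc : b ≠ c) (hbe : b ≠ e) (w : V) :
    ((edge a b ⊔ edge c e).neighborSet w).ncard
      = if w = a ∨ w = b ∨ w = c ∨ w = e then 1 else 0 := by
  have hN : ∀ z, z ∈ (edge a b ⊔ edge c e).neighborSet w
      ↔ (w = a ∧ z = b ∨ w = b ∧ z = a) ∨ (w = c ∧ z = e ∨ w = e ∧ z = c) := by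
    intro z
    simp only [neighborSet_sup, Set.mem_union, mem_neighborSet, edge_adj]
    grind
  split_ifs with hw
  · rw [Set.ncard_eq_one]
    rcases hw with rfl | rfl | rfl | rfl
    · exact ⟨b, by ext; simp only [hN, Set.mem_singleton_iff]; grind⟩
    · exact ⟨a, by ext; simp only [hN, Set.mem_singleton_iff]; grind⟩
    · exact ⟨e, by ext; simp only [hN, Set.mem_singleton_iff]; grind⟩
    · exact ⟨c, by ext; simp only [hN, Set.mem_singleton_iff]; grind⟩
  · rw [show (edge a b ⊔ edge c e).neighborSet w = ∅ by
      ext; simp only [hN, Set.mem_empty_iff_false, iff_false]; grind, Set.ncard_empty]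

def CanJoin (G M : SimpleGraph V) (u x : V) : Prop := x ≠ u ∧ ¬G.Adj u x ∧ ¬M.Adj u x

def switch (G : SimpleGraph V) (u v x y : V) : SimpleGraph V :=
  G \ (edge u v ⊔ edge x y) ⊔ (edge u x ⊔ edge v y)

section Switch

variable {G M : SimpleGraph V} {u v x y : V}

lemma switch_switch (hGuv : G.Adj u v) (hGxy : G.Adj x y) (hGux : ¬G.Adj u x)
    (hGvy : ¬G.Adj v y) : (G.switch u v x y).switch u x v y = G := by
  rw [switch, switch, sup_sdiff_right_self,
    ((disjoint_edge_sup_edge hGux hGvy).mono_left sdiff_le).sdiff_eq_left,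
    sdiff_sup_cancel (edge_sup_edge_le hGuv hGxy)]

lemma ncard_neighborSet_switch [Finite V] (hGuv : G.Adj u v) (hGxy : G.Adj x y)
    (hxu : x ≠ u) (hGux : ¬G.Adj u x) (hyv : y ≠ v) (hGvy : ¬G.Adj v y) (w : V) :
    ((G.switch u v x y).neighborSet w).ncard = (G.neighborSet w).ncard := by
  classical
  have hxv : x ≠ v := fun h => hGux (h ▸ hGuv)
  have hyu : y ≠ u := fun h => hGvy (h ▸ hGuv.symm)
  have := ncard_neighborSet_sdiff_sup (edge_sup_edge_le hGuv hGxy)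
    (disjoint_edge_sup_edge hGux hGvy) w
  rw [ncard_neighborSet_edge_sup_edge hGuv.ne hGxy.ne hxu.symm hyu.symm hxv.symm hyv.symm,
    ncard_neighborSet_edge_sup_edge hxu.symm hyv.symm hGuv.ne hyu.symm hxv hGxy.ne] at this
  rw [switch]
  split_ifs at this <;> first | omega | tauto

lemma switch_mem_Gset [Fintype V] [DecidableEq V] {d : V → ℕ} (huv : u ≠ v)
    (hG : G ∈ Gset d (edgeGraph u v) M) (hGxy : G.Adj x y) (hx : CanJoin G M u x)
    (hy : CanJoin G M v y) : G.switch u v x y ∈ Gset d ⊥ (M ⊔ edgeGraph u v) := by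
  have hGuv := adj_of_mem_Gset huv hG
  obtain ⟨hd, -, hGM⟩ := hG
  have hxv : x ≠ v := fun h => hx.2.1 (h ▸ hGuv)
  have hyu : y ≠ u := fun h => hy.2.1 (h ▸ hGuv.symm)
  refine ⟨fun w => ?_, bot_le, ?_⟩
  · rw [ncard_neighborSet_switch hGuv hGxy hx.1 hx.2.1 hy.1 hy.2.1, hd]
  · refine disjoint_sup_left.mpr ⟨disjoint_sup_right.mpr ⟨hGM.mono_left sdiff_le, ?_⟩, ?_⟩
    · exact disjoint_sdiff_self_left.mono_right le_sup_left
    · refine disjoint_sup_left.mpr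
        ⟨disjoint_sup_right.mpr ⟨?_, ?_⟩, disjoint_sup_right.mpr ⟨?_, ?_⟩⟩
      · exact ((disjoint_edge _).mpr hx.2.2).symm
      · exact (disjoint_edge _).mpr (by simp [edge_adj, hxv.symm, huv.symm])
      · exact ((disjoint_edge _).mpr hy.2.2).symm
      · exact (disjoint_edge _).mpr (by simp [edge_adj, hyu.symm, huv])

lemma switch_adj_left (hxu : x ≠ u) : (G.switch u v x y).Adj u x := by
  simp [switch, edge_adj, hxu.symm]

lemma switch_adj_right (hyv : y ≠ v) : (G.switch u v x y).Adj v y := by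
  simp [switch, edge_adj, hyv.symm]

end Switch

section Counting
open scoped Classical
variable [Fintype V] {G M : SimpleGraph V} {u v : V}

lemma card_filter_adj_eq_ncard (G : SimpleGraph V) (x : V) :
    #(univ.filter (G.Adj x)) = (G.neighborSet x).ncard := by
  rw [← Set.ncard_coe_finset]; congr; ext; simp

lemma card_adjPairs_fst_mem (G : SimpleGraph V) (F : Finset V) :
    #((F ×ˢ univ).filter fun p : V × V => G.Adj p.1 p.2)
      = ∑ x ∈ F, (G.neighborSet x).ncard := by
  simp_rw [card_filter, sum_product, ← card_filter, card_filter_adj_eq_ncard]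

lemma card_adjPairs_snd_mem (G : SimpleGraph V) (F : Finset V) :
    #((univ ×ˢ F).filter fun p : V × V => G.Adj p.1 p.2)
      = ∑ y ∈ F, (G.neighborSet y).ncard := by
  simp_rw [card_filter, sum_product_right, G.adj_comm, ← card_filter,
    card_filter_adj_eq_ncard]

lemma card_adjPairs_fst_mem_le {d : V → ℕ}
    (hd : ∀ w, (G.neighborSet w).ncard = d w) {F : Finset V} {k : ℕ} (hF : #F ≤ k) :
    #((F ×ˢ univ).filter fun p : V × V => G.Adj p.1 p.2) ≤ Dsum d k := by
  simpa only [card_adjPairs_fst_mem, hd] using sum_le_Dsum d hF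

lemma card_adjPairs_snd_mem_le {d : V → ℕ}
    (hd : ∀ w, (G.neighborSet w).ncard = d w) {F : Finset V} {k : ℕ} (hF : #F ≤ k) :
    #((univ ×ˢ F).filter fun p : V × V => G.Adj p.1 p.2) ≤ Dsum d k := by
  simpa only [card_adjPairs_snd_mem, hd] using sum_le_Dsum d hF

noncomputable def blocked (G M : SimpleGraph V) (u : V) : Finset V :=
  univ.filter fun x => ¬G.CanJoin M u x

lemma card_blocked_le (G M : SimpleGraph V) (u : V) :
    #(blocked G M u) ≤ (G.neighborSet u).ncard + (M.neighborSet u).ncard + 1 := by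
  rw [← card_filter_adj_eq_ncard, ← card_filter_adj_eq_ncard]
  calc #(blocked G M u) ≤ #(univ.filter (G.Adj u) ∪ univ.filter (M.Adj u) ∪ {u}) :=
        card_le_card fun x => by
          simp only [blocked, CanJoin, ne_eq, not_and, Decidable.not_not, mem_filter, mem_univ,
            true_and, mem_union, mem_singleton]
          tauto
    _ ≤ _ := (card_union_le _ _).trans (Nat.add_le_add_right (card_union_le _ _) _)

lemma card_erase_blocked_le [DecidableEq V] {d : V → ℕ}
    (hd : ∀ w, (G.neighborSet w).ncard = d w) (hGuv : G.Adj u v) :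
    #((blocked G M u).erase v) ≤ d u + (M.neighborSet u).ncard := by
  have hv : v ∈ blocked G M u := by simp [blocked, CanJoin, hGuv]
  have := card_blocked_le G M u
  rw [card_erase_of_mem hv, ← hd u]
  omega

noncomputable def switchPairs (G M : SimpleGraph V) (u v : V) : Finset (V × V) :=
  univ.filter fun p => G.Adj p.1 p.2 ∧ G.CanJoin M u p.1 ∧ G.CanJoin M v p.2

lemma sum_le_card_switchPairs_add [DecidableEq V] {d : V → ℕ} (huv : u ≠ v)
    (hG : G ∈ Gset d (edgeGraph u v) M) :
    ∑ w, d w ≤ #(G.switchPairs M u v)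
      + (Dsum d (d u + (M.neighborSet u).ncard) + Dsum d (d v + (M.neighborSet v).ncard)) := by
  have hGuv := adj_of_mem_Gset huv hG
  have hd := hG.1
  set P := (univ ×ˢ univ).filter fun p : V × V => G.Adj p.1 p.2
  set L := ((blocked G M u).erase v ×ˢ univ).filter fun p : V × V => G.Adj p.1 p.2
  set R := (univ ×ˢ (blocked G M v).erase u).filter fun p : V × V => G.Adj p.1 p.2
  have hP : #P = ∑ w, d w := by simp only [P, card_adjPairs_fst_mem, hd]
  have hL : #L ≤ Dsum d (d u + (M.neighborSet u).ncard) :=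
    card_adjPairs_fst_mem_le hd (card_erase_blocked_le hd hGuv)
  have hR : #R ≤ Dsum d (d v + (M.neighborSet v).ncard) :=
    card_adjPairs_snd_mem_le hd (card_erase_blocked_le hd hGuv.symm)
  have hbad : P \ G.switchPairs M u v ⊆ L ∪ R ∪ {(v, u)} := by
    rintro ⟨x, y⟩
    simp only [P, L, R, switchPairs, blocked, CanJoin, mem_sdiff, mem_filter, mem_union,
      mem_product, mem_erase, mem_singleton, mem_univ, true_and, and_true, Prod.mk.injEq]
    grind [G.adj_comm]
  have huvLR : (u, v) ∈ L ∩ R := by simp [L, R, blocked, CanJoin, hGuv, huv, huv.symm]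
  have hLR : #(L ∪ R) + 1 ≤ #L + #R := by
    rw [← card_union_add_card_inter L R]
    exact Nat.add_le_add_left (card_pos.mpr ⟨_, huvLR⟩) _
  calc ∑ w, d w = #P := hP.symm
    _ ≤ #(P \ G.switchPairs M u v) + #(G.switchPairs M u v) := card_le_card_sdiff_add_card
    _ ≤ #(L ∪ R ∪ {(v, u)}) + #(G.switchPairs M u v) :=
        Nat.add_le_add_right (card_le_card hbad) _
    _ ≤ _ := by have := card_union_le (L ∪ R) {(v, u)}; rw [card_singleton] at this; omega

lemma card_sigma_switchPairs_le [DecidableEq V] (d : V → ℕ) (M : SimpleGraph V)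
    (huv : u ≠ v) :
    #((Gset d (edgeGraph u v) M).toFinset.sigma fun G => G.switchPairs M u v)
      ≤ #((Gset d ⊥ (M ⊔ edgeGraph u v)).toFinset.sigma
          fun H => univ.filter (H.Adj u) ×ˢ univ.filter (H.Adj v)) := by
  refine card_le_card_of_injOn (fun q => ⟨q.1.switch u v q.2.1 q.2.2, q.2⟩) ?_ ?_
  · rintro ⟨G, x, y⟩ hq
    simp only [mem_coe, mem_sigma, Set.mem_toFinset, switchPairs, mem_filter, mem_product,
      mem_univ, true_and] at hq ⊢
    obtain ⟨hG, hxy, hx, hy⟩ := hq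
    exact ⟨switch_mem_Gset huv hG hxy hx hy, switch_adj_left hx.1, switch_adj_right hy.1⟩
  · rintro ⟨G₁, x, y⟩ h₁ ⟨G₂, x₂, y₂⟩ h₂ h
    simp only [Sigma.mk.injEq, heq_eq_eq, Prod.mk.injEq] at h
    obtain ⟨h, rfl, rfl⟩ := h
    simp only [mem_coe, mem_sigma, Set.mem_toFinset, switchPairs, mem_filter, mem_univ,
      true_and] at h₁ h₂
    obtain ⟨hG₁, hxy₁, hx₁, hy₁⟩ := h₁
    obtain ⟨hG₂, hxy₂, hx₂, hy₂⟩ := h₂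
    rw [← switch_switch (adj_of_mem_Gset huv hG₁) hxy₁ hx₁.2.1 hy₁.2.1, h,
      switch_switch (adj_of_mem_Gset huv hG₂) hxy₂ hx₂.2.1 hy₂.2.1]

lemma ncard_Gset_mul_sum_le [DecidableEq V] (d : V → ℕ) (M : SimpleGraph V) (huv : u ≠ v) :
    (Gset d (edgeGraph u v) M).ncard * ∑ w, d w
      ≤ (Gset d ⊥ (M ⊔ edgeGraph u v)).ncard * (d u * d v)
        + (Gset d (edgeGraph u v) M).ncard
          * (Dsum d (d u + (M.neighborSet u).ncard) + Dsum d (d v + (M.neighborSet v).ncard)) := by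
  have hTT' := card_sigma_switchPairs_le d M huv
  rw [Set.ncard_eq_toFinset_card', Set.ncard_eq_toFinset_card']
  set A := (Gset d (edgeGraph u v) M).toFinset
  set B := (Gset d ⊥ (M ⊔ edgeGraph u v)).toFinset
  set D := Dsum d (d u + (M.neighborSet u).ncard) + Dsum d (d v + (M.neighborSet v).ncard)
  have hT : #A * ∑ w, d w ≤ #(A.sigma fun G => G.switchPairs M u v) + #A * D := by
    rw [card_sigma, ← smul_eq_mul, ← sum_const, ← smul_eq_mul, ← sum_const,
      ← sum_add_distrib]
    exact sum_le_sum fun G hG => sum_le_card_switchPairs_add huv (Set.mem_toFinset.mp hG)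
  have hT' : #(B.sigma fun H => univ.filter (H.Adj u) ×ˢ univ.filter (H.Adj v))
      = #B * (d u * d v) := by
    rw [card_sigma, ← smul_eq_mul, ← sum_const]
    refine sum_congr rfl fun H hH => ?_
    rw [card_product, card_filter_adj_eq_ncard, card_filter_adj_eq_ncard,
      (Set.mem_toFinset.mp hH).1, (Set.mem_toFinset.mp hH).1]
  omega

end Counting
end SimpleGraph

theorem two_switch_ratio_upper_general {V : Type*} [Fintype V] [DecidableEq V] (d : V → ℕ)
    (M : SimpleGraph V) (u v : V) (huv : u ≠ v)
    (hf : 0 < 1 - ((Dsum d (d u + (M.neighborSet u).ncard) : ℝ)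
            + (Dsum d (d v + (M.neighborSet v).ncard) : ℝ)) / (∑ w, (d w : ℝ))) :
    ((Gset d (edgeGraph u v) M).ncard : ℝ) / ((Gset d ⊥ (M ⊔ edgeGraph u v)).ncard : ℝ)
      ≤ ((d u : ℝ) * (d v : ℝ) / (∑ w, (d w : ℝ)))
          * (1 / (1 - ((Dsum d (d u + (M.neighborSet u).ncard) : ℝ)
              + (Dsum d (d v + (M.neighborSet v).ncard) : ℝ)) / (∑ w, (d w : ℝ)))) := by
  rcases (Gset d (edgeGraph u v) M).eq_empty_or_nonempty with hA | ⟨G, hG⟩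
  · rw [hA, Set.ncard_empty, Nat.cast_zero, zero_div]
    exact mul_nonneg (by positivity) (one_div_nonneg.mpr hf.le)
  have hS : 0 < ∑ w, (d w : ℝ) := sum_pos' (fun w _ => by positivity)
    ⟨u, mem_univ u, by exact_mod_cast pos_of_mem_Gset huv hG⟩
  refine div_le_div_mul_one_div_one_sub_div (by positivity) (by positivity) hS hf ?_
  have := (Nat.cast_le (α := ℝ)).mpr (ncard_Gset_mul_sum_le d M huv)
  push_cast at this
  linarith

theorem two_switch_ratio_upper {V : Type*} [Fintype V] [DecidableEq V] (d : V → ℕ)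
    (M : SimpleGraph V) (u v : V) (huv : u ≠ v) (hMuv : ¬ M.Adj u v)
    (h1 : (Gset d (edgeGraph u v) M).Nonempty)
    (h2 : (Gset d ⊥ (M ⊔ edgeGraph u v)).Nonempty)
    (hf : 0 < 1 - ((Dsum d (d u + (M.neighborSet u).ncard) : ℝ)
            + (Dsum d (d v + (M.neighborSet v).ncard) : ℝ)) / (∑ w, (d w : ℝ))) :
    ((Gset d (edgeGraph u v) M).ncard : ℝ) / ((Gset d ⊥ (M ⊔ edgeGraph u v)).ncard : ℝ)
      ≤ ((d u : ℝ) * (d v : ℝ) / (∑ w, (d w : ℝ)))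
          * (1 / (1 - ((Dsum d (d u + (M.neighborSet u).ncard) : ℝ)
              + (Dsum d (d v + (M.neighborSet v).ncard) : ℝ)) / (∑ w, (d w : ℝ)))) :=
  two_switch_ratio_upper_general d M u v huv hf
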